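/- Let L be a lattice which decomposes as an orthogonal direct sum L = R ⊕ E, where R is the radical of L and E is a unimodular sublattice. Then an isometry g of L induces the identity on the quotient group Hom(L,ℤ)/λ(L) if and only if g restricts to the identity on the radical R. -/
import Mathlib


/-- For a lattice `L = R ⊕ E` with `R` the radical and `E` unimodular, an isometry `g`
of `L` induces the identity on `Hom(L,ℤ)/λ(L)` (where `λ(x) = ⟨x,·⟩` and `g` acts on
`Hom(L,ℤ)` by `φ ↦ φ ∘ g⁻¹`) if and only if `g` restricts to the identity on `R`. -/
theorem inducesId_on_discriminant_iff_id_on_radical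
    {L : Type*} [AddCommGroup L] [Module ℤ L] [Module.Free ℤ L] [Module.Finite ℤ L]
    (B : L →ₗ[ℤ] L →ₗ[ℤ] ℤ) (hsymm : ∀ x y : L, B x y = B y x)
    (R E : Submodule ℤ L)
    (hR : ∀ x : L, x ∈ R ↔ ∀ y : L, B x y = 0)
    (hcompl : IsCompl R E)
    (hEunimod : Function.Bijective fun x : E => (B (x : L)).comp E.subtype)
    (g : L ≃ₗ[ℤ] L) (hg : ∀ x y : L, B (g x) (g y) = B x y) :
    (∀ φ : L →ₗ[ℤ] ℤ, ∃ z : L, φ ∘ₗ (g.symm : L →ₗ[ℤ] L) - φ = B z) ↔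
      (∀ x ∈ R, g x = x) := by
  have hB0 : ∀ x ∈ R, ∀ z : L, B z x = 0 := fun x hx z =>
    (hsymm z x).trans ((hR x).mp hx z)
  constructor
  · intro h x hx
    have key : ∀ φ : L →ₗ[ℤ] ℤ, φ (g.symm x) = φ x := by
      intro φ
      obtain ⟨z, hz⟩ := h φ
      have h1 : φ (g.symm x) - φ x = B z x := by
        have := LinearMap.congr_fun hz x
        simpa using this
      rw [hB0 x hx z] at h1
      linarith
    have hsx : g.symm x = x := by
      let b := Module.Free.chooseBasis ℤ L
      refine b.ext_elem fun i => ?_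
      have := key (b.coord i)
      simpa [Module.Basis.coord_apply] using this
    calc g x = g (g.symm x) := by rw [hsx]
    _ = x := g.apply_symm_apply x
  · intro h φ
    set ψ : L →ₗ[ℤ] ℤ := φ ∘ₗ (g.symm : L →ₗ[ℤ] L) - φ with hψ
    have hψR : ∀ x ∈ R, ψ x = 0 := by
      intro x hx
      have hsx : g.symm x = x := by
        conv_lhs => rw [← h x hx]
        exact g.symm_apply_apply x
      simp [hψ, hsx]
    obtain ⟨e, he⟩ := hEunimod.2 (ψ ∘ₗ E.subtype)
    refine ⟨(e : L), ?_⟩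

    ext x
    have hx : x ∈ R ⊔ E := by rw [hcompl.sup_eq_top]; trivial
    obtain ⟨r, hr, e', he', rfl⟩ := Submodule.mem_sup.mp hx
    have h3 : ψ e' = B (e : L) e' := by
      have := congrArg (fun f => f ⟨e', he'⟩) he
      simpa using this.symm
    have h1 : ψ r = 0 := hψR r hr
    have h2 : B (e : L) r = 0 := hB0 r hr e
    simp only [map_add, h1, h2, h3, zero_add]
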